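/- Let ι be a nonempty finite type, let β, M > 0, and let d : ι → ℝ satisfy β ≤ d i ≤ M for all i. Let C : Matrix ι ι ℝ be symmetric, λ ∈ ℝ, ε ≥ 0, and let v : ι → ℝ be nonzero with ‖((Matrix.diagonal d) * C).mulVec v − λ • v‖ ≤ ε * ‖v‖ in the Euclidean norm. Then there exists μ ∈ spectrum ℝ ((Matrix.diagonal d) * C) with |μ − λ| ≤ Real.sqrt (M / β) * ε. -/
import Mathlib


/-- Euclidean norm of a vector indexed by a finite type. -/
noncomputable def euclNorm {α : Type*} [Fintype α] (v : α → ℝ) : ℝ :=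
  ‖(WithLp.equiv 2 (α → ℝ)).symm v‖

open Matrix

lemma euclNorm_eq {α : Type*} [Fintype α] (v : α → ℝ) :
    euclNorm v = Real.sqrt (∑ i, v i ^ 2) := by
  simp [euclNorm, EuclideanSpace.norm_eq, Real.norm_eq_abs, sq_abs]

lemma sumsq_eq_dot {α : Type*} [Fintype α] (f : α → ℝ) :
    ∑ i, f i ^ 2 = dotProduct f f := by
  simp [dotProduct, sq]

/-- A matrix with orthonormal columns preserves the sum of squares. -/
lemma sumsq_mulVec_orth {ι : Type*} [Fintype ι] [DecidableEq ι]
    (U : Matrix ι ι ℝ) (hU : Uᵀ * U = 1) (x : ι → ℝ) :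
    ∑ i, (U.mulVec x) i ^ 2 = ∑ i, x i ^ 2 := by
  rw [sumsq_eq_dot, sumsq_eq_dot]
  have hx : U.mulVec x = Matrix.vecMul x Uᵀ := by
    rw [← Matrix.mulVec_transpose, Matrix.transpose_transpose]
  rw [Matrix.dotProduct_mulVec, hx, Matrix.vecMul_vecMul, hU, Matrix.vecMul_one]

/-- Bauer–Fike for Hermitian real matrices. -/
lemma bauerFike_hermitian {ι : Type*} [Fintype ι] [Nonempty ι] [DecidableEq ι]
    (S : Matrix ι ι ℝ) (hS : S.IsHermitian) (lam δ : ℝ) (hδ : 0 ≤ δ)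
    (w : ι → ℝ) (hw : w ≠ 0)
    (h : euclNorm (S.mulVec w - lam • w) ≤ δ * euclNorm w) :
    ∃ μ ∈ spectrum ℝ S, |μ - lam| ≤ δ := by
  classical
  set U : Matrix ι ι ℝ := (hS.eigenvectorUnitary : Matrix ι ι ℝ) with hUdef
  set μ : ι → ℝ := hS.eigenvalues with hμdef
  have hstar : star U = Uᵀ := by
    rw [Matrix.star_eq_conjTranspose, Matrix.conjTranspose_eq_transpose_of_trivial]
  have hUU : star U * U = 1 := Unitary.coe_star_mul_self hS.eigenvectorUnitary
  have hUU' : U * star U = 1 := Unitary.coe_mul_star_self hS.eigenvectorUnitary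
  have hdiag : Matrix.diagonal (RCLike.ofReal ∘ μ) = Matrix.diagonal μ := rfl
  have hspec : S = U * Matrix.diagonal μ * star U := by
    rw [← hdiag]; exact hS.spectral_theorem
  set u : ι → ℝ := (star U).mulVec w with hudef
  -- u ≠ 0
  have hwu : U.mulVec u = w := by
    rw [hudef, Matrix.mulVec_mulVec, hUU', Matrix.one_mulVec]
  have hu0 : u ≠ 0 := by
    intro h0
    apply hw
    rw [← hwu, h0, Matrix.mulVec_zero]
  -- transformed residual
  have hkey : star U * S = Matrix.diagonal μ * star U := by
    rw [hspec, ← Matrix.mul_assoc, ← Matrix.mul_assoc, hUU, Matrix.one_mul]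
  have hres : (star U).mulVec (S.mulVec w - lam • w)
      = fun i => (μ i - lam) * u i := by
    have h1 : (star U).mulVec (S.mulVec w - lam • w)
        = (Matrix.diagonal μ).mulVec u - lam • u := by
      rw [Matrix.mulVec_sub, Matrix.mulVec_smul, Matrix.mulVec_mulVec, hkey, hudef,
        Matrix.mulVec_mulVec]
    rw [h1]
    funext i
    simp [Matrix.mulVec_diagonal, sub_mul]
  -- sums of squares
  have horthT : (star U)ᵀ * star U = 1 := by
    rw [hstar, Matrix.transpose_transpose, ← hstar, hUU']
  have hsum1 : ∑ i, ((μ i - lam) * u i) ^ 2 = ∑ i, (S.mulVec w - lam • w) i ^ 2 := by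
    have h2 := sumsq_mulVec_orth (star U) horthT (S.mulVec w - lam • w)
    rw [hres] at h2
    simpa using h2
  have hsumu : ∑ i, u i ^ 2 = ∑ i, w i ^ 2 := sumsq_mulVec_orth (star U) horthT w
  -- square the hypothesis
  have hW : (0:ℝ) ≤ ∑ i, w i ^ 2 := Finset.sum_nonneg fun i _ => sq_nonneg _
  have hR : (0:ℝ) ≤ ∑ i, (S.mulVec w - lam • w) i ^ 2 :=
    Finset.sum_nonneg fun i _ => sq_nonneg _
  have hsq : ∑ i, (S.mulVec w - lam • w) i ^ 2 ≤ δ ^ 2 * ∑ i, w i ^ 2 := by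
    have h2 := pow_le_pow_left₀ (by rw [euclNorm_eq]; exact Real.sqrt_nonneg _) h 2
    rw [euclNorm_eq, euclNorm_eq, Real.sq_sqrt hR, mul_pow, Real.sq_sqrt hW] at h2
    exact h2
  -- pick the minimizing eigenvalue
  obtain ⟨i0, -, hmin⟩ := Finset.exists_min_image Finset.univ
    (fun i => |μ i - lam|) ⟨Classical.arbitrary ι, Finset.mem_univ _⟩
  refine ⟨μ i0, hS.eigenvalues_mem_spectrum_real i0, ?_⟩
  have hTpos : (0:ℝ) < ∑ i, u i ^ 2 := by
    obtain ⟨j, hj⟩ := Function.ne_iff.mp hu0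
    refine Finset.sum_pos' (fun i _ => sq_nonneg _) ⟨j, Finset.mem_univ j, ?_⟩
    have : 0 < |u j| := abs_pos.mpr hj
    calc (0:ℝ) < |u j| ^ 2 := pow_pos this 2
    _ = u j ^ 2 := sq_abs _
  have hlow : (μ i0 - lam) ^ 2 * ∑ i, u i ^ 2 ≤ ∑ i, ((μ i - lam) * u i) ^ 2 := by
    rw [Finset.mul_sum]
    refine Finset.sum_le_sum fun i _ => ?_
    rw [mul_pow]
    refine mul_le_mul_of_nonneg_right ?_ (sq_nonneg _)
    have h1 := hmin i (Finset.mem_univ i)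
    calc (μ i0 - lam) ^ 2 = |μ i0 - lam| ^ 2 := (sq_abs _).symm
      _ ≤ |μ i - lam| ^ 2 := pow_le_pow_left₀ (abs_nonneg _) h1 2
      _ = (μ i - lam) ^ 2 := sq_abs _
  have hfin : (μ i0 - lam) ^ 2 * ∑ i, u i ^ 2 ≤ δ ^ 2 * ∑ i, u i ^ 2 := by
    calc (μ i0 - lam) ^ 2 * ∑ i, u i ^ 2 ≤ ∑ i, ((μ i - lam) * u i) ^ 2 := hlow
      _ = ∑ i, (S.mulVec w - lam • w) i ^ 2 := hsum1
      _ ≤ δ ^ 2 * ∑ i, w i ^ 2 := hsq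
      _ = δ ^ 2 * ∑ i, u i ^ 2 := by rw [hsumu]
  have hsq2 : (μ i0 - lam) ^ 2 ≤ δ ^ 2 := le_of_mul_le_mul_right hfin hTpos
  have := Real.sqrt_le_sqrt hsq2
  rwa [Real.sqrt_sq_eq_abs, Real.sqrt_sq hδ] at this

/-- Bauer–Fike-type perturbation bound for a product of a positive diagonal matrix and a
symmetric matrix: an approximate eigenvalue of quality `ε` lies within `√(M/β)·ε` of a true
eigenvalue. -/
theorem diagonal_mul_symmetric_pseudospectrum
    (ι : Type*) [Fintype ι] [Nonempty ι] [DecidableEq ι]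
    (β M : ℝ) (hβ : 0 < β) (hM : 0 < M)
    (d : ι → ℝ) (hd : ∀ i, β ≤ d i ∧ d i ≤ M)
    (C : Matrix ι ι ℝ) (hC : C.IsSymm)
    (lam : ℝ) (ε : ℝ) (hε : 0 ≤ ε)
    (v : ι → ℝ) (hv : v ≠ 0)
    (happrox : euclNorm (((Matrix.diagonal d) * C).mulVec v - lam • v) ≤ ε * euclNorm v) :
    ∃ μ ∈ spectrum ℝ ((Matrix.diagonal d) * C), |μ - lam| ≤ Real.sqrt (M / β) * ε := by
  classical
  set s : ι → ℝ := fun i => Real.sqrt (d i) with hsdef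
  have hdpos : ∀ i, 0 < d i := fun i => lt_of_lt_of_le hβ (hd i).1
  have hspos : ∀ i, 0 < s i := fun i => Real.sqrt_pos.mpr (hdpos i)
  have hss : ∀ i, s i * s i = d i := fun i => Real.mul_self_sqrt (hdpos i).le
  set P : Matrix ι ι ℝ := Matrix.diagonal s with hPdef
  set Pinv : Matrix ι ι ℝ := Matrix.diagonal (fun i => (s i)⁻¹) with hPinvdef
  have hPPinv : P * Pinv = 1 := by
    rw [hPdef, hPinvdef, Matrix.diagonal_mul_diagonal, ← Matrix.diagonal_one]
    exact congrArg Matrix.diagonal (funext fun i => mul_inv_cancel₀ (hspos i).ne')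
  have hPinvP : Pinv * P = 1 := by
    rw [hPdef, hPinvdef, Matrix.diagonal_mul_diagonal, ← Matrix.diagonal_one]
    exact congrArg Matrix.diagonal (funext fun i => inv_mul_cancel₀ (hspos i).ne')
  set S : Matrix ι ι ℝ := P * C * P with hSdef
  -- spectrum transfer
  have hPP : P * P = Matrix.diagonal d := by
    rw [hPdef, Matrix.diagonal_mul_diagonal]
    exact congrArg Matrix.diagonal (funext fun i => hss i)
  have hconj : P * S * Pinv = Matrix.diagonal d * C := by
    rw [hSdef]
    calc P * (P * C * P) * Pinv = (P * P) * C * (P * Pinv) := by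
          simp only [Matrix.mul_assoc]
      _ = Matrix.diagonal d * C := by rw [hPP, hPPinv, Matrix.mul_one]
  have hspectrum : spectrum ℝ (Matrix.diagonal d * C) = spectrum ℝ S := by
    set u : (Matrix ι ι ℝ)ˣ := ⟨P, Pinv, hPPinv, hPinvP⟩ with hudef
    have : Matrix.diagonal d * C = (u : Matrix ι ι ℝ) * S * ((u⁻¹ : (Matrix ι ι ℝ)ˣ) : Matrix ι ι ℝ) := by
      rw [← hconj]; rfl
    rw [this, spectrum.units_conjugate]
  -- S is Hermitian
  have hS : S.IsHermitian := by
    rw [Matrix.IsHermitian, Matrix.conjTranspose_eq_transpose_of_trivial, hSdef,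
      Matrix.transpose_mul, Matrix.transpose_mul, hPdef, Matrix.diagonal_transpose, hC.eq]
    simp only [Matrix.mul_assoc]
  -- the transformed vector
  set w : ι → ℝ := Pinv.mulVec v with hwdef
  have hvw : P.mulVec w = v := by
    rw [hwdef, Matrix.mulVec_mulVec, hPPinv, Matrix.one_mulVec]
  have hw0 : w ≠ 0 := by
    intro h0
    apply hv
    rw [← hvw, h0, Matrix.mulVec_zero]
  -- the transformed residual
  have hSP : S * Pinv = Pinv * (Matrix.diagonal d * C) := by
    have h1 : P * C * P * Pinv = P * C := by
      rw [Matrix.mul_assoc (P * C), hPPinv, Matrix.mul_one]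
    have h2 : Pinv * (Matrix.diagonal d * C) = P * C := by
      rw [← Matrix.mul_assoc, hPinvdef, hPdef, Matrix.diagonal_mul_diagonal]
      congr 1
      exact congrArg Matrix.diagonal
        (funext fun i => by rw [← hss i, inv_mul_cancel_left₀ (hspos i).ne'])
    rw [hSdef, h1, h2]
  have hres : S.mulVec w - lam • w
      = Pinv.mulVec ((Matrix.diagonal d * C).mulVec v - lam • v) := by
    rw [Matrix.mulVec_sub, Matrix.mulVec_smul, hwdef, Matrix.mulVec_mulVec, hSP,
      ← Matrix.mulVec_mulVec]
  -- sums of squares estimates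
  set rv : ι → ℝ := (Matrix.diagonal d * C).mulVec v - lam • v with hrvdef
  have hA : (0:ℝ) ≤ ∑ i, rv i ^ 2 := Finset.sum_nonneg fun i _ => sq_nonneg _
  have hV : (0:ℝ) ≤ ∑ i, v i ^ 2 := Finset.sum_nonneg fun i _ => sq_nonneg _
  have hW : (0:ℝ) ≤ ∑ i, w i ^ 2 := Finset.sum_nonneg fun i _ => sq_nonneg _
  -- square happrox
  have happ2 : ∑ i, rv i ^ 2 ≤ ε ^ 2 * ∑ i, v i ^ 2 := by
    have h2 := pow_le_pow_left₀ (by rw [euclNorm_eq]; exact Real.sqrt_nonneg _) happrox 2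
    rw [euclNorm_eq, euclNorm_eq, Real.sq_sqrt hA, mul_pow, Real.sq_sqrt hV] at h2
    exact h2
  -- R ≤ β⁻¹ * A
  have hRA : ∑ i, (S.mulVec w - lam • w) i ^ 2 ≤ β⁻¹ * ∑ i, rv i ^ 2 := by
    rw [hres, Finset.mul_sum]
    refine Finset.sum_le_sum fun i _ => ?_
    rw [hPinvdef, Matrix.mulVec_diagonal, mul_pow]
    refine mul_le_mul_of_nonneg_right ?_ (sq_nonneg _)
    rw [← Real.sqrt_inv]
    calc Real.sqrt (d i)⁻¹ ^ 2 = (d i)⁻¹ := Real.sq_sqrt (inv_nonneg.mpr (hdpos i).le)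
      _ ≤ β⁻¹ := by
          have := (hd i).1
          exact inv_anti₀ hβ this
  -- V ≤ M * W
  have hVW : ∑ i, v i ^ 2 ≤ M * ∑ i, w i ^ 2 := by
    rw [Finset.mul_sum]
    refine Finset.sum_le_sum fun i _ => ?_
    have hvi : v i = s i * w i := by
      rw [← hvw, hPdef, Matrix.mulVec_diagonal]
    rw [hvi, mul_pow]
    refine mul_le_mul_of_nonneg_right ?_ (sq_nonneg _)
    calc s i ^ 2 = d i := by rw [sq, hss i]
      _ ≤ M := (hd i).2
  -- combine
  set δ : ℝ := Real.sqrt (M / β) * ε with hδdef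
  have hδ0 : 0 ≤ δ := mul_nonneg (Real.sqrt_nonneg _) hε
  have hδsq : δ ^ 2 = (M / β) * ε ^ 2 := by
    rw [hδdef, mul_pow, Real.sq_sqrt (by positivity)]
  have hRfin : ∑ i, (S.mulVec w - lam • w) i ^ 2 ≤ δ ^ 2 * ∑ i, w i ^ 2 := by
    rw [hδsq]
    calc ∑ i, (S.mulVec w - lam • w) i ^ 2 ≤ β⁻¹ * ∑ i, rv i ^ 2 := hRA
      _ ≤ β⁻¹ * (ε ^ 2 * ∑ i, v i ^ 2) := by
          exact mul_le_mul_of_nonneg_left happ2 (by positivity)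
      _ ≤ β⁻¹ * (ε ^ 2 * (M * ∑ i, w i ^ 2)) := by
          refine mul_le_mul_of_nonneg_left ?_ (by positivity)
          exact mul_le_mul_of_nonneg_left hVW (by positivity)
      _ = M / β * ε ^ 2 * ∑ i, w i ^ 2 := by ring
  have hnorm : euclNorm (S.mulVec w - lam • w) ≤ δ * euclNorm w := by
    rw [euclNorm_eq, euclNorm_eq]
    calc Real.sqrt (∑ i, (S.mulVec w - lam • w) i ^ 2)
        ≤ Real.sqrt (δ ^ 2 * ∑ i, w i ^ 2) := Real.sqrt_le_sqrt hRfin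
      _ = δ * Real.sqrt (∑ i, w i ^ 2) := by
          rw [Real.sqrt_mul (sq_nonneg _), Real.sqrt_sq hδ0]
  obtain ⟨μ, hμmem, hμ⟩ := bauerFike_hermitian S hS lam δ hδ0 w hw0 hnorm
  exact ⟨μ, hspectrum ▸ hμmem, hμ⟩
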